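/- Let 𝕜 be a field, V and W vector spaces over 𝕜, u : Fin m → V and w : Fin n → W linearly independent families, and C an m × n matrix over 𝕜. Set v := Σ_{i,j} C_{i j} • (u_i ⊗ w_j) ∈ V ⊗ W. Then dim U_V(v) = rank C and dim U_W(v) = rank Cᵀ; in particular dim U_V(v) = dim U_W(v). -/

import Mathlib

open scoped TensorProduct

section
variable (𝕜 : Type*) [Field 𝕜]

/-- The contraction `id_V ⊗ φ : V ⊗ W → V`, sending `x ⊗ y` to `φ(y) • x`. -/
noncomputable def rContract (V W : Type*) [AddCommGroup V] [Module 𝕜 V]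
    [AddCommGroup W] [Module 𝕜 W] (φ : W →ₗ[𝕜] 𝕜) : V ⊗[𝕜] W →ₗ[𝕜] V :=
  (TensorProduct.rid 𝕜 V).toLinearMap ∘ₗ TensorProduct.map LinearMap.id φ

/-- The contraction `ψ ⊗ id_W : V ⊗ W → W`, sending `x ⊗ y` to `ψ(x) • y`. -/
noncomputable def lContract (V W : Type*) [AddCommGroup V] [Module 𝕜 V]
    [AddCommGroup W] [Module 𝕜 W] (ψ : V →ₗ[𝕜] 𝕜) : V ⊗[𝕜] W →ₗ[𝕜] W :=
  (TensorProduct.lid 𝕜 W).toLinearMap ∘ₗ TensorProduct.map ψ LinearMap.id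

/-- The left minimal subspace `U_V(v)` of `v ∈ V ⊗ W`: the span of all contractions
`(id_V ⊗ φ)(v)` with `φ` in the algebraic dual of `W`. -/
noncomputable def leftMin (V W : Type*) [AddCommGroup V] [Module 𝕜 V]
    [AddCommGroup W] [Module 𝕜 W] (v : V ⊗[𝕜] W) : Submodule 𝕜 V :=
  Submodule.span 𝕜 {x | ∃ φ : W →ₗ[𝕜] 𝕜, rContract 𝕜 V W φ v = x}

/-- The right minimal subspace `U_W(v)` of `v ∈ V ⊗ W`: the span of all contractions
`(ψ ⊗ id_W)(v)` with `ψ` in the algebraic dual of `V`. -/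
noncomputable def rightMin (V W : Type*) [AddCommGroup V] [Module 𝕜 V]
    [AddCommGroup W] [Module 𝕜 W] (v : V ⊗[𝕜] W) : Submodule 𝕜 W :=
  Submodule.span 𝕜 {y | ∃ ψ : V →ₗ[𝕜] 𝕜, lContract 𝕜 V W ψ v = y}

end

/-! Writing `v = ∑ i j, C i j • (u i ⊗ w j)`, the contraction of `v` against `φ ∈ W^*` is the
image of `C *ᵥ (φ (w j))_j` under the injective map `c ↦ ∑ i, c i • u i`. Since the `w j` are
linearly independent, every vector of coefficients `(φ (w j))_j` is attained, so `U_V(v)` is an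
isomorphic copy of the column space of `C`. Swapping the tensor factors turns `U_W(v)` into the
left minimal subspace of the transposed expansion. -/

open scoped Matrix

theorem LinearIndependent.exists_dual_apply_eq {𝕜 M ι : Type*} [Field 𝕜] [AddCommGroup M]
    [Module 𝕜 M] {x : ι → M} (hx : LinearIndependent 𝕜 x) (c : ι → 𝕜) :
    ∃ φ : Module.Dual 𝕜 M, ∀ i, φ (x i) = c i := by
  let b := Module.Basis.span hx
  obtain ⟨φ, hφ⟩ := LinearMap.exists_extend (b.constr 𝕜 c)
  refine ⟨φ, fun i => ?_⟩
  have hxi : x i = (Submodule.span 𝕜 (Set.range x)).subtype (b i) := by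
    simp [b, Module.Basis.span_apply]
  rw [hxi, ← LinearMap.comp_apply, hφ, Module.Basis.constr_basis]

section
variable {𝕜 V W : Type*} [Field 𝕜] [AddCommGroup V] [Module 𝕜 V]
  [AddCommGroup W] [Module 𝕜 W]

@[simp]
theorem rContract_tmul (φ : Module.Dual 𝕜 W) (x : V) (y : W) :
    rContract 𝕜 V W φ (x ⊗ₜ y) = φ y • x := by
  simp [rContract]

theorem lContract_eq_rContract_comm (ψ : Module.Dual 𝕜 V) (v : V ⊗[𝕜] W) :
    lContract 𝕜 V W ψ v = rContract 𝕜 W V ψ (TensorProduct.comm 𝕜 V W v) := by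
  induction v using TensorProduct.induction_on with
  | zero => simp
  | tmul x y => simp [lContract]
  | add v v' hv hv' => simp only [map_add, hv, hv']

theorem rightMin_eq_leftMin_comm (v : V ⊗[𝕜] W) :
    rightMin 𝕜 V W v = leftMin 𝕜 W V (TensorProduct.comm 𝕜 V W v) := by
  simp only [rightMin, leftMin, lContract_eq_rContract_comm]

variable {ι κ : Type*} [Fintype ι] [Fintype κ]

theorem comm_sum_smul_tmul (u : ι → V) (w : κ → W) (C : Matrix ι κ 𝕜) :
    TensorProduct.comm 𝕜 V W (∑ i, ∑ j, C i j • (u i ⊗ₜ w j))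
      = ∑ j, ∑ i, Cᵀ j i • (w j ⊗ₜ u i) := by
  simp only [map_sum, map_smul, TensorProduct.comm_tmul, Matrix.transpose_apply]
  exact Finset.sum_comm

theorem rContract_sum_smul_tmul (u : ι → V) (w : κ → W) (C : Matrix ι κ 𝕜)
    (φ : Module.Dual 𝕜 W) :
    rContract 𝕜 V W φ (∑ i, ∑ j, C i j • (u i ⊗ₜ w j))
      = Fintype.linearCombination 𝕜 u (C *ᵥ fun j => φ (w j)) := by
  simp only [map_sum, map_smul, rContract_tmul, Fintype.linearCombination_apply,
    Matrix.mulVec, dotProduct, Finset.sum_smul, smul_smul]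

theorem leftMin_sum_smul_tmul (u : ι → V) {w : κ → W} (hw : LinearIndependent 𝕜 w)
    (C : Matrix ι κ 𝕜) :
    leftMin 𝕜 V W (∑ i, ∑ j, C i j • (u i ⊗ₜ w j))
      = (LinearMap.range C.mulVecLin).map (Fintype.linearCombination 𝕜 u) := by
  have hcontractions : {x | ∃ φ : Module.Dual 𝕜 W,
      rContract 𝕜 V W φ (∑ i, ∑ j, C i j • (u i ⊗ₜ w j)) = x}
        = Fintype.linearCombination 𝕜 u '' LinearMap.range C.mulVecLin := by
    ext x
    simp only [rContract_sum_smul_tmul, Set.mem_ofPred_eq, Set.mem_image, SetLike.mem_coe,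
      LinearMap.mem_range, Matrix.mulVecLin_apply]
    constructor
    · rintro ⟨φ, rfl⟩
      exact ⟨_, ⟨_, rfl⟩, rfl⟩
    · rintro ⟨_, ⟨c, rfl⟩, rfl⟩
      obtain ⟨φ, hφ⟩ := hw.exists_dual_apply_eq c
      exact ⟨φ, by simp only [hφ]⟩
  rw [leftMin, hcontractions, ← Submodule.map_span, Submodule.span_eq]

theorem finrank_leftMin_sum_smul_tmul {u : ι → V} {w : κ → W} (hu : LinearIndependent 𝕜 u)
    (hw : LinearIndependent 𝕜 w) (C : Matrix ι κ 𝕜) :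
    Module.finrank 𝕜 (leftMin 𝕜 V W (∑ i, ∑ j, C i j • (u i ⊗ₜ w j))) = C.rank := by
  rw [leftMin_sum_smul_tmul u hw, Matrix.rank]
  exact (Submodule.equivMapOfInjective _
    (linearIndependent_iff_injective_fintypeLinearCombination.mp hu) _).symm.finrank_eq

theorem finrank_rightMin_sum_smul_tmul {u : ι → V} {w : κ → W} (hu : LinearIndependent 𝕜 u)
    (hw : LinearIndependent 𝕜 w) (C : Matrix ι κ 𝕜) :
    Module.finrank 𝕜 (rightMin 𝕜 V W (∑ i, ∑ j, C i j • (u i ⊗ₜ w j))) = Cᵀ.rank := by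
  rw [rightMin_eq_leftMin_comm, comm_sum_smul_tmul, finrank_leftMin_sum_smul_tmul hw hu]

/-- **Dimensions of minimal subspaces and matrix rank.**
If `v = ∑ i j, C i j • (u i ⊗ w j)` with `u`, `w` linearly independent families, then
`dim U_V(v) = rank C`, `dim U_W(v) = rank Cᵀ`, and in particular the two dimensions
agree. -/
theorem finrank_minimal_subspaces_eq_matrix_rank {m n : ℕ}
    (u : Fin m → V) (w : Fin n → W)
    (hu : LinearIndependent 𝕜 u) (hw : LinearIndependent 𝕜 w)
    (C : Matrix (Fin m) (Fin n) 𝕜) :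
    Module.finrank 𝕜 (leftMin 𝕜 V W (∑ i, ∑ j, C i j • (u i ⊗ₜ[𝕜] w j))) = C.rank ∧
    Module.finrank 𝕜 (rightMin 𝕜 V W (∑ i, ∑ j, C i j • (u i ⊗ₜ[𝕜] w j)))
      = C.transpose.rank ∧
    Module.finrank 𝕜 (leftMin 𝕜 V W (∑ i, ∑ j, C i j • (u i ⊗ₜ[𝕜] w j)))
      = Module.finrank 𝕜 (rightMin 𝕜 V W (∑ i, ∑ j, C i j • (u i ⊗ₜ[𝕜] w j))) := by
  have hleft := finrank_leftMin_sum_smul_tmul hu hw C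
  have hright := finrank_rightMin_sum_smul_tmul hu hw C
  exact ⟨hleft, hright, by rw [hleft, hright, Matrix.rank_transpose]⟩

end
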